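/- arXiv:2210.04599 — 3 statements merged into one kernel-verified Lean document; each statement's English description precedes it below -/
import Mathlib

section
/- The number of sequences of length d over an alphabet of M symbols with one distinguished symbol σ, such that the sequence uses exactly i distinct symbols other than σ (with σ allowed to appear any number of times, possibly zero), equals ((M-1)!/(M-i-1)!) · S(d + 1, i + 1). -/
/-!
Prepending a symbol `x` to a sequence `g` whose symbols other than `σ` form a set `T` of size `j`
keeps that size at `j` when `x ∈ insert σ T` (`j + 1` choices) and raises it to `j + 1` otherwise
(`M - 1 - j` choices). So for `i ≥ 1` the counts `N d i` satisfy
`N (d + 1) i = (i + 1) * N d i + (M - i) * N d (i - 1)`, which is the Stirling recurrence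
`S (d + 2) (i + 1) = (i + 1) * S (d + 1) (i + 1) + S (d + 1) i` scaled by the falling factorial
`(M - 1).descFactorial i`.
-/

def stirling : ℕ → ℕ → ℕ
  | 0, 0 => 1
  | 0, _ + 1 => 0
  | _ + 1, 0 => 0
  | n + 1, k + 1 => (k + 1) * stirling n (k + 1) + stirling n k

open Finset

theorem stirling_eq_stirlingSecond : ∀ n k, stirling n k = Nat.stirlingSecond n k
  | 0, 0 | 0, _ + 1 | _ + 1, 0 => rfl
  | n + 1, k + 1 => by
    rw [stirling, Nat.stirlingSecond_succ_succ, stirling_eq_stirlingSecond n (k + 1),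
      stirling_eq_stirlingSecond n k]

theorem Finset.card_erase_insert {α : Type*} [DecidableEq α] (σ x : α) (S : Finset α) :
    #((insert x S).erase σ) = #(S.erase σ) + if x ∈ insert σ S then 0 else 1 := by
  by_cases hx : x = σ
  · simp [hx, erase_insert_eq_erase]
  · rw [erase_insert_of_ne hx, card_insert_eq_ite]
    simp only [mem_insert, mem_erase, hx, false_or, ne_eq, not_false_eq_true, true_and]
    split_ifs <;> rfl

theorem Finset.image_univ_cons {α : Type*} [DecidableEq α] {d : ℕ} (x : α) (g : Fin d → α) :
    univ.image (Fin.cons x g : Fin (d + 1) → α) = insert x (univ.image g) := by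
  ext y
  simp [Fin.exists_fin_succ, eq_comm]

section SymbolsBesides

variable {α : Type*} [Fintype α] [DecidableEq α] (σ : α)

theorem card_filter_card_erase_insert_eq (S : Finset α) (i : ℕ) :
    #{x | #((insert x S).erase σ) = i} =
      (if #(S.erase σ) = i then i + 1 else 0) +
        if #(S.erase σ) + 1 = i then Fintype.card α - i else 0 := by
  have hcard : #(insert σ S) = #(S.erase σ) + 1 := by
    rw [← erase_insert_eq_erase, card_erase_add_one (mem_insert_self σ S)]
  calc #{x | #((insert x S).erase σ) = i}
      = ∑ _x ∈ insert σ S, (if #(S.erase σ) = i then 1 else 0) +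
          ∑ _x ∈ (insert σ S)ᶜ, (if #(S.erase σ) + 1 = i then 1 else 0) := by
        rw [card_filter, ← sum_add_sum_compl (insert σ S)]
        congr 1 <;> refine sum_congr rfl fun x hx => ?_ <;>
          simp_all [card_erase_insert]
    _ = _ := by
        simp only [sum_const, card_compl, hcard, smul_eq_mul]
        split_ifs <;> omega

def symbolsBesides {d : ℕ} (f : Fin d → α) : Finset α := (univ.image f).erase σ

theorem card_filter_card_symbolsBesides_succ (d i : ℕ) :
    #{f : Fin (d + 1) → α | #(symbolsBesides σ f) = i} =
      (i + 1) * #{g : Fin d → α | #(symbolsBesides σ g) = i} +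
        (Fintype.card α - i) * #{g : Fin d → α | #(symbolsBesides σ g) + 1 = i} := by
  have hsplit : #{f : Fin (d + 1) → α | #(symbolsBesides σ f) = i} =
      ∑ g : Fin d → α, #{x | #((insert x (univ.image g)).erase σ) = i} := by
    rw [card_filter, ← (Fin.consEquiv fun _ => α).sum_comp, Fintype.sum_prod_type_right]
    refine sum_congr rfl fun g _ => ?_
    rw [card_filter]
    exact sum_congr rfl fun x _ => by
      rw [symbolsBesides, ← image_univ_cons]
      rfl
  rw [hsplit]
  simp only [card_filter_card_erase_insert_eq, sum_add_distrib, sum_ite, sum_const,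
    smul_eq_mul, mul_zero, add_zero]
  unfold symbolsBesides
  ring

theorem card_filter_card_symbolsBesides_eq (d i : ℕ) :
    #{f : Fin d → α | #(symbolsBesides σ f) = i} =
      (Fintype.card α - 1).descFactorial i * Nat.stirlingSecond (d + 1) (i + 1) := by
  induction d generalizing i with
  | zero =>
    have hempty (f : Fin 0 → α) : symbolsBesides σ f = ∅ := by simp [symbolsBesides]
    rcases i with _ | i <;> simp [hempty, Nat.stirlingSecond_succ_succ]
  | succ d ih =>
    rw [card_filter_card_symbolsBesides_succ, ih]
    rcases i with _ | i
    · simp [Nat.stirlingSecond_succ_succ]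
    · simp only [Nat.add_right_cancel_iff, ih, Nat.stirlingSecond_succ_succ (d + 1) (i + 1),
        Nat.descFactorial_succ]
      rw [Nat.sub_sub, Nat.add_comm 1 i]
      ring

end SymbolsBesides

theorem count_sequences_i_symbols_other_than_sigma_general (M d i : ℕ)
    (hiM : i ≤ M - 1) (σ : Fin M) :
    Fintype.card {f : Fin d → Fin M // ((Finset.univ.image f).erase σ).card = i} =
      Nat.factorial (M - 1) / Nat.factorial (M - i - 1) * stirling (d + 1) (i + 1) := by
  rw [Fintype.card_subtype, Nat.sub_right_comm, ← Nat.descFactorial_eq_div hiM,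
    stirling_eq_stirlingSecond]
  exact (card_filter_card_symbolsBesides_eq σ d i).trans (by rw [Fintype.card_fin])

theorem count_sequences_i_symbols_other_than_sigma (M d i : ℕ) (hM : 1 ≤ M)
    (hid : i ≤ d) (hiM : i ≤ M - 1) (σ : Fin M) :
    Fintype.card {f : Fin d → Fin M // ((Finset.univ.image f).erase σ).card = i} =
      Nat.factorial (M - 1) / Nat.factorial (M - i - 1) * stirling (d + 1) (i + 1) :=
  count_sequences_i_symbols_other_than_sigma_general M d i hiM σ
end

section
/- In the M/M/1 queue with positive signals (arrival rate α+α⁺ effective births, death rate μ+α⁻), the geometric distribution π(n) = (1-ρ)ρ^n with ρ = (α+α⁺)/(μ+α⁻) fails the quasi-reversibility departure condition for positive-signal departures with constant rate: the triggered positive-signal departure intensity at state n, given by ∑_{n'} π(n') q_{s⁺}^A(n', n) f_{s⁺,s⁺}(n', n) / π(n), equals 0 for n = 0 and ρ⁻¹α⁺ for n ≥ 1, hence is not constant in n. -/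
/-!
Only upward jumps `n' → n' + 1` carry positive-signal departures, so the inflow into state `n`
comes from `n - 1` alone: it vanishes at `0` and equals `π (n - 1) αp` for `n ≥ 1`. Dividing by the
geometric weight `π n` gives `ρ⁻¹ αp`, and no single constant `β` can be both `0` and `ρ⁻¹ αp`.
-/

theorem tsum_upward_at_zero {w : ℕ → ℕ → ℝ} (hw : ∀ m n, n ≠ m + 1 → w m n = 0) :
    ∑' m, w m 0 = 0 := by
  simp [hw _ 0 (Nat.succ_ne_zero _).symm]

theorem tsum_upward_at_succ {w : ℕ → ℕ → ℝ} (hw : ∀ m n, n ≠ m + 1 → w m n = 0) (n : ℕ) :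
    ∑' m, w m (n + 1) = w n (n + 1) :=
  tsum_eq_single n fun m hm => hw m (n + 1) (by omega)

theorem geometric_div_succ {π : ℕ → ℝ} {c ρ : ℝ} (hπ : ∀ n, π n = c * ρ ^ n) (hc : c ≠ 0)
    (hρ : ρ ≠ 0) (n : ℕ) : π n / π (n + 1) = ρ⁻¹ := by
  rw [hπ, hπ, pow_succ]
  field_simp

theorem mm1_positive_signals_not_quasi_reversible (α αp μ αm : ℝ)
    (hα : 0 < α) (hαp : 0 < αp) (hμ : 0 < μ) (hαm : 0 < αm)
    (ρ : ℝ) (hρ : ρ = (α + αp) / (μ + αm)) (hρ1 : ρ < 1)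
    (π : ℕ → ℝ) (hπ : ∀ n, π n = (1 - ρ) * ρ ^ n)
    (qA f : ℕ → ℕ → ℝ)
    (hqA : ∀ n n', qA n n' = if n' = n + 1 then αp else 0)
    (hf : ∀ n n', f n n' = if n' = n + 1 then 1 else 0) :
    (∑' n' : ℕ, π n' * qA n' 0 * f n' 0) / π 0 = 0 ∧
      (∀ n : ℕ, 1 ≤ n → (∑' n' : ℕ, π n' * qA n' n * f n' n) / π n = ρ⁻¹ * αp) ∧
      ¬ ∃ β : ℝ, ∀ n : ℕ, ∑' n' : ℕ, π n' * qA n' n * f n' n = β * π n := by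
  have hρ0 : ρ ≠ 0 := by rw [hρ]; positivity
  have h1ρ : 1 - ρ ≠ 0 := (sub_pos.2 hρ1).ne'
  have hπ0 (n : ℕ) : π n ≠ 0 := by rw [hπ]; exact mul_ne_zero h1ρ (pow_ne_zero n hρ0)
  have hw (m n : ℕ) (h : n ≠ m + 1) : π m * qA m n * f m n = 0 := by simp [hqA, hf, h]
  have hjump (n : ℕ) : π n * qA n (n + 1) * f n (n + 1) = π n * αp := by simp [hqA, hf]
  have hzero := tsum_upward_at_zero hw
  have hsucc := tsum_upward_at_succ hw
  refine ⟨by rw [hzero, zero_div], fun n hn => ?_, fun ⟨β, hβ⟩ => ?_⟩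
  · obtain ⟨n, rfl⟩ := Nat.exists_eq_add_of_le' hn
    rw [hsucc, hjump, mul_div_right_comm, geometric_div_succ hπ h1ρ hρ0]
  · have hβ0 : β = 0 := by
      have h0 := hβ 0
      rw [hzero] at h0
      exact (mul_eq_zero.1 h0.symm).resolve_right (hπ0 0)
    have h1 := hβ 1
    rw [hsucc, hjump, hβ0, zero_mul] at h1
    exact mul_ne_zero (hπ0 0) hαp.ne' h1
end

section
/- Adding the extra departure rate q_{s⁺}^D(0, 0) = ρ⁻¹α⁺ to the M/M/1 queue with positive signals restores the quasi-reversibility condition for positive-signal departures: for all n ≥ 0, ∑_{n'} π(n')(q_{s⁺}^D(n', n) + q_{s⁺}^A(n', n) f_{s⁺,s⁺}(n', n)) = ρ⁻¹α⁺ · π(n). -/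
/-!
Into state `n` the positive-signal transitions come only from `n - 1` (an arrival, rate `α⁺`)
and, when `n = 0`, from the extra departure loop at `0` (rate `ρ⁻¹α⁺`). So the inflow at `0` is
`π 0 ρ⁻¹α⁺`, and at `n + 1` it is `π n α⁺ = ρ⁻¹α⁺ π (n + 1)` because `π` is geometric with ratio `ρ`.
-/

def arrivalLoopRate (a c : ℝ) (k n : ℕ) : ℝ :=
  (if k = 0 ∧ n = 0 then c else 0) + if n = k + 1 then a else 0

theorem tsum_mul_arrivalLoopRate_zero (π : ℕ → ℝ) (a c : ℝ) :
    ∑' k, π k * arrivalLoopRate a c k 0 = π 0 * c := by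
  rw [tsum_eq_single 0 fun k hk => by simp [arrivalLoopRate, hk]]
  simp [arrivalLoopRate]

theorem tsum_mul_arrivalLoopRate_succ (π : ℕ → ℝ) (a c : ℝ) (n : ℕ) :
    ∑' k, π k * arrivalLoopRate a c k (n + 1) = π n * a := by
  rw [tsum_eq_single n fun k hk => by simp [arrivalLoopRate, Ne.symm hk]]
  simp [arrivalLoopRate]

theorem eq_inv_mul_succ_of_eq_mul_pow {π : ℕ → ℝ} {c ρ : ℝ} (hρ : ρ ≠ 0)
    (hπ : ∀ n, π n = c * ρ ^ n) (n : ℕ) : π n = ρ⁻¹ * π (n + 1) := by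
  rw [hπ, hπ, pow_succ]
  field_simp

theorem mm1_positive_signals_extra_departure_restores_qr_general (α αp μ αm : ℝ)
    (hα : 0 < α) (hαp : 0 < αp) (hμ : 0 < μ) (hαm : 0 < αm)
    (ρ : ℝ) (hρ : ρ = (α + αp) / (μ + αm))
    (π : ℕ → ℝ) (hπ : ∀ n, π n = (1 - ρ) * ρ ^ n)
    (qA f qD : ℕ → ℕ → ℝ)
    (hqA : ∀ n n', qA n n' = if n' = n + 1 then αp else 0)
    (hf : ∀ n n', f n n' = if n' = n + 1 then 1 else 0)
    (hqD : ∀ n n', qD n n' = if n = 0 ∧ n' = 0 then ρ⁻¹ * αp else 0) :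
    ∀ n : ℕ, ∑' n' : ℕ, π n' * (qD n' n + qA n' n * f n' n) = ρ⁻¹ * αp * π n := by
  have hρ0 : ρ ≠ 0 := by rw [hρ]; positivity
  have hrate : ∀ k n, qD k n + qA k n * f k n = arrivalLoopRate αp (ρ⁻¹ * αp) k n := by
    intro k n
    by_cases h : n = k + 1 <;> simp [hqD, hqA, hf, arrivalLoopRate, h]
  intro n
  simp_rw [hrate]
  cases n with
  | zero => rw [tsum_mul_arrivalLoopRate_zero]; ring
  | succ n =>
    rw [tsum_mul_arrivalLoopRate_succ, eq_inv_mul_succ_of_eq_mul_pow hρ0 hπ]; ring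

theorem mm1_positive_signals_extra_departure_restores_qr (α αp μ αm : ℝ)
    (hα : 0 < α) (hαp : 0 < αp) (hμ : 0 < μ) (hαm : 0 < αm)
    (ρ : ℝ) (hρ : ρ = (α + αp) / (μ + αm)) (hρ1 : ρ < 1)
    (π : ℕ → ℝ) (hπ : ∀ n, π n = (1 - ρ) * ρ ^ n)
    (qA f qD : ℕ → ℕ → ℝ)
    (hqA : ∀ n n', qA n n' = if n' = n + 1 then αp else 0)
    (hf : ∀ n n', f n n' = if n' = n + 1 then 1 else 0)
    (hqD : ∀ n n', qD n n' = if n = 0 ∧ n' = 0 then ρ⁻¹ * αp else 0) :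
    ∀ n : ℕ, ∑' n' : ℕ, π n' * (qD n' n + qA n' n * f n' n) = ρ⁻¹ * αp * π n :=
  mm1_positive_signals_extra_departure_restores_qr_general α αp μ αm hα hαp hμ hαm ρ hρ π hπ qA f qD
    hqA hf hqD
end
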